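/- Let X₁, …, Xₙ be independent nonnegative integrable random variables on a probability space and S_n = X₁ + … + Xₙ. Then 𝔼(S_n·log*(S_n)) ≤ 𝔼(S_n)·log*(𝔼(S_n)) + Σ_{i=1}^n 𝔼(X_i·log*(X_i)), with all expectations taken in [0,∞]. -/

import Mathlib

open MeasureTheory ProbabilityTheory
open scoped ENNReal

noncomputable section

def logStar (x : ℝ) : ℝ := if x ≤ Real.exp 1 then x / Real.exp 1 else Real.log x

/-!
Write `S = ∑ Xᵢ`, so that `𝔼[S log* S] = ∑ᵢ 𝔼[Xᵢ log*(Xᵢ + Tᵢ)]` with `Tᵢ = S - Xᵢ` independent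
of `Xᵢ`. The function `log*` is concave (linear up to `e`, then `log`, with the same slope `1/e`
at `e`), so it lies below its tangent line at `Xᵢ + 𝔼 Tᵢ`. That tangent bound is affine in `Tᵢ`
with coefficients depending on `Xᵢ` only, so by independence `Tᵢ` may be replaced by its mean:
`𝔼[Xᵢ log*(Xᵢ + Tᵢ)] ≤ 𝔼[Xᵢ log*(Xᵢ + 𝔼 Tᵢ)]`. Finally `log*` is increasing and subadditive on
`[0, ∞)`, so `log*(Xᵢ + 𝔼 Tᵢ) ≤ log* Xᵢ + log* 𝔼 S`, and summing over `i` gives the claim.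
-/

open Real

lemma log_le_log_add_div_sub_one {x y : ℝ} (hx : 0 < x) (hy : 0 < y) :
    log y ≤ log x + (y / x - 1) := by
  have := log_le_sub_one_of_pos (div_pos hy hx)
  rw [log_div hy.ne' hx.ne'] at this
  linarith

lemma one_lt_log_of_exp_one_lt {x : ℝ} (hx : exp 1 < x) : 1 < log x := by
  rwa [lt_log_iff_exp_lt ((exp_pos 1).trans hx)]

lemma logStar_le_div_exp_one (x : ℝ) : logStar x ≤ x / exp 1 := by
  unfold logStar
  split_ifs with hx
  · rfl
  · have := log_le_log_add_div_sub_one (exp_pos 1) ((exp_pos 1).trans (not_le.1 hx))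
    rwa [log_exp, add_sub_cancel] at this

lemma logStar_mono : Monotone logStar := by
  intro a b hab
  unfold logStar
  split_ifs with ha hb hb
  · gcongr
  · have : a / exp 1 ≤ 1 := (div_le_one (exp_pos 1)).2 ha
    linarith [one_lt_log_of_exp_one_lt (not_le.1 hb)]
  · exact absurd (hab.trans hb) ha
  · exact log_le_log ((exp_pos 1).trans (not_le.1 ha)) hab

lemma logStar_nonneg {x : ℝ} (hx : 0 ≤ x) : 0 ≤ logStar x := by
  simpa [logStar, (exp_pos 1).le] using logStar_mono hx

lemma logStar_add_le {a b : ℝ} (ha : 0 ≤ a) (hb : 0 ≤ b) :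
    logStar (a + b) ≤ logStar a + logStar b := by
  wlog hab : a ≤ b generalizing a b
  · rw [add_comm a, add_comm (logStar a)]
    exact this hb ha (not_le.1 hab).le
  by_cases hbe : b ≤ exp 1
  · calc logStar (a + b) ≤ (a + b) / exp 1 := logStar_le_div_exp_one _
      _ = logStar a + logStar b := by
        rw [add_div, logStar, if_pos (hab.trans hbe), logStar, if_pos hbe]
  rw [not_le] at hbe
  have hb₀ : 0 < b := (exp_pos 1).trans hbe
  have hlog : logStar (a + b) ≤ log b + a / b := by
    rw [logStar, if_neg (by linarith)]
    have := log_le_log_add_div_sub_one hb₀ (by linarith : 0 < a + b)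
    rwa [add_div, div_self hb₀.ne', add_sub_cancel_right] at this
  -- `a / b ≤ log* a`: below `e` because `b > e`, above `e` because `a / b ≤ 1 < log a`
  have hdiv : a / b ≤ logStar a := by
    unfold logStar
    split_ifs with hae
    · exact div_le_div_of_nonneg_left ha (exp_pos 1) hbe.le
    · linarith [(div_le_one hb₀).2 hab, one_lt_log_of_exp_one_lt (not_le.1 hae)]
  have hlogb : logStar b = log b := if_neg hbe.not_ge
  linarith

@[fun_prop]
lemma measurable_logStar : Measurable logStar :=
  Measurable.ite (measurableSet_le measurable_id measurable_const)
    (measurable_id.div_const _) measurable_log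

-- `logStarIntercept s₀ + logStarSlope s₀ * s` is the tangent line of `log*` at `s₀`
def logStarIntercept (s₀ : ℝ) : ℝ := if s₀ ≤ exp 1 then 0 else log s₀ - 1

def logStarSlope (s₀ : ℝ) : ℝ := if s₀ ≤ exp 1 then (exp 1)⁻¹ else s₀⁻¹

lemma logStarIntercept_nonneg (s₀ : ℝ) : 0 ≤ logStarIntercept s₀ := by
  unfold logStarIntercept
  split_ifs with h
  · rfl
  · linarith [one_lt_log_of_exp_one_lt (not_le.1 h)]

lemma logStarSlope_nonneg (s₀ : ℝ) : 0 ≤ logStarSlope s₀ := by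
  unfold logStarSlope
  split_ifs with h
  · positivity
  · exact inv_nonneg.2 ((exp_pos 1).trans (not_le.1 h)).le

lemma logStarIntercept_add_logStarSlope_mul_self (s : ℝ) :
    logStarIntercept s + logStarSlope s * s = logStar s := by
  unfold logStarIntercept logStarSlope logStar
  split_ifs with h
  · rw [zero_add, inv_mul_eq_div]
  · rw [inv_mul_cancel₀ ((exp_pos 1).trans (not_le.1 h)).ne', sub_add_cancel]

lemma logStar_le_tangent (s₀ s : ℝ) :
    logStar s ≤ logStarIntercept s₀ + logStarSlope s₀ * s := by
  unfold logStarIntercept logStarSlope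
  split_ifs with h₀
  · rw [zero_add, inv_mul_eq_div]
    exact logStar_le_div_exp_one s
  rw [not_le] at h₀
  have hs₀ : 0 < s₀ := (exp_pos 1).trans h₀
  unfold logStar
  split_ifs with hs
  · -- the tangent at `s₀` passes above the point `(e, 1)`, and below `e` it is less steep
    have he := log_le_log_add_div_sub_one hs₀ (exp_pos 1)
    rw [log_exp] at he
    have hslope : s₀⁻¹ ≤ (exp 1)⁻¹ := inv_anti₀ (exp_pos 1) h₀.le
    have := mul_le_mul_of_nonneg_right hs (sub_nonneg.2 hslope)
    rw [mul_sub, mul_sub, mul_inv_cancel₀ (exp_pos 1).ne'] at this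
    rw [div_eq_mul_inv] at he ⊢
    linarith
  · have := log_le_log_add_div_sub_one hs₀ ((exp_pos 1).trans (not_le.1 hs))
    rw [div_eq_inv_mul] at this
    linarith

lemma measurable_logStarIntercept : Measurable logStarIntercept :=
  Measurable.ite (measurableSet_le measurable_id measurable_const)
    measurable_const (measurable_log.sub measurable_const)

lemma measurable_logStarSlope : Measurable logStarSlope :=
  Measurable.ite (measurableSet_le measurable_id measurable_const)
    measurable_const measurable_inv

section Independence

variable {Ω : Type*} [MeasurableSpace Ω] {μ : Measure Ω}

/-- Jensen's inequality in the independent summand `T`, for a concave `F` presented by its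
tangent lines `a s₀ + d s₀ * s`. -/
theorem lintegral_ofReal_mul_comp_add_le_of_tangent {F a d : ℝ → ℝ}
    (ha : Measurable a) (hd : Measurable d) (ha₀ : ∀ s, 0 ≤ a s) (hd₀ : ∀ s, 0 ≤ d s)
    (hF_le : ∀ s₀ s, F s ≤ a s₀ + d s₀ * s) (hF_eq : ∀ s, a s + d s * s = F s)
    {X T : Ω → ℝ} (hX : Measurable X) (hT : Measurable T) (hX₀ : ∀ ω, 0 ≤ X ω)
    (hT₀ : ∀ ω, 0 ≤ T ω) (hTi : Integrable T μ) (hXT : IndepFun X T μ) :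
    ∫⁻ ω, ENNReal.ofReal (X ω * F (X ω + T ω)) ∂μ
      ≤ ∫⁻ ω, ENNReal.ofReal (X ω * F (X ω + ∫ ω, T ω ∂μ)) ∂μ := by
  set τ := ∫ ω, T ω ∂μ
  have hτ : 0 ≤ τ := integral_nonneg hT₀
  set g : Ω → ℝ≥0∞ := fun ω ↦ ENNReal.ofReal (X ω * (a (X ω + τ) + d (X ω + τ) * X ω))
  set φ : ℝ → ℝ≥0∞ := fun x ↦ ENNReal.ofReal (x * d (x + τ))
  have hg : Measurable g := by fun_prop
  have hφ : Measurable φ := by fun_prop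
  have hφX : Measurable fun ω ↦ φ (X ω) := hφ.comp hX
  have htangent : ∀ ω {t : ℝ}, 0 ≤ t → g ω + φ (X ω) * ENNReal.ofReal t
      = ENNReal.ofReal (X ω * (a (X ω + τ) + d (X ω + τ) * (X ω + t))) := by
    intro ω t ht
    have := hX₀ ω; have := ha₀ (X ω + τ); have := hd₀ (X ω + τ)
    rw [← ENNReal.ofReal_mul (by positivity), ← ENNReal.ofReal_add (by positivity) (by positivity)]
    ring_nf
  calc ∫⁻ ω, ENNReal.ofReal (X ω * F (X ω + T ω)) ∂μ
      ≤ ∫⁻ ω, g ω + φ (X ω) * ENNReal.ofReal (T ω) ∂μ := by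
        refine lintegral_mono fun ω ↦ ?_
        rw [htangent ω (hT₀ ω)]
        exact ENNReal.ofReal_le_ofReal (mul_le_mul_of_nonneg_left (hF_le _ _) (hX₀ ω))
    _ = ∫⁻ ω, g ω ∂μ + (∫⁻ ω, φ (X ω) ∂μ) * ∫⁻ ω, ENNReal.ofReal (T ω) ∂μ := by
        rw [lintegral_add_left hg, lintegral_mul_eq_lintegral_mul_lintegral_of_indepFun''
          hφX.aemeasurable hT.ennreal_ofReal.aemeasurable (hXT.comp hφ ENNReal.measurable_ofReal)]
    _ = ∫⁻ ω, g ω + φ (X ω) * ENNReal.ofReal τ ∂μ := by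
        rw [lintegral_add_left hg, lintegral_mul_const _ hφX,
          ofReal_integral_eq_lintegral_ofReal hTi (ae_of_all _ hT₀)]
    _ = ∫⁻ ω, ENNReal.ofReal (X ω * F (X ω + τ)) ∂μ := by
        refine lintegral_congr fun ω ↦ ?_
        rw [htangent ω hτ, hF_eq]

theorem lintegral_ofReal_mul_logStar_add_le {X T : Ω → ℝ} (hX : Measurable X)
    (hT : Measurable T) (hX₀ : ∀ ω, 0 ≤ X ω) (hT₀ : ∀ ω, 0 ≤ T ω) (hTi : Integrable T μ)
    (hXT : IndepFun X T μ) :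
    ∫⁻ ω, ENNReal.ofReal (X ω * logStar (X ω + T ω)) ∂μ
      ≤ ∫⁻ ω, ENNReal.ofReal (X ω * logStar (X ω + ∫ ω, T ω ∂μ)) ∂μ :=
  lintegral_ofReal_mul_comp_add_le_of_tangent measurable_logStarIntercept measurable_logStarSlope
    logStarIntercept_nonneg logStarSlope_nonneg logStar_le_tangent
    logStarIntercept_add_logStarSlope_mul_self hX hT hX₀ hT₀ hTi hXT

theorem lintegral_ofReal_mul_logStar_add_const_le {Y : Ω → ℝ} (hY : Measurable Y)
    (hY₀ : ∀ ω, 0 ≤ Y ω) (hYi : Integrable Y μ) {c : ℝ} (hc : 0 ≤ c) :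
    ∫⁻ ω, ENNReal.ofReal (Y ω * logStar (Y ω + c)) ∂μ
      ≤ ∫⁻ ω, ENNReal.ofReal (Y ω * logStar (Y ω)) ∂μ
        + ENNReal.ofReal ((∫ ω, Y ω ∂μ) * logStar c) := by
  have hpoint : ∀ ω, ENNReal.ofReal (Y ω * logStar (Y ω + c))
      ≤ ENNReal.ofReal (Y ω * logStar (Y ω))
        + ENNReal.ofReal (Y ω) * ENNReal.ofReal (logStar c) := by
    intro ω
    have := logStar_nonneg (hY₀ ω); have := logStar_nonneg hc; have := hY₀ ω
    rw [← ENNReal.ofReal_mul (hY₀ ω), ← ENNReal.ofReal_add (by positivity) (by positivity),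
      ← mul_add]
    exact ENNReal.ofReal_le_ofReal
      (mul_le_mul_of_nonneg_left (logStar_add_le (hY₀ ω) hc) (hY₀ ω))
  calc ∫⁻ ω, ENNReal.ofReal (Y ω * logStar (Y ω + c)) ∂μ
      ≤ ∫⁻ ω, ENNReal.ofReal (Y ω * logStar (Y ω))
          + ENNReal.ofReal (Y ω) * ENNReal.ofReal (logStar c) ∂μ := lintegral_mono hpoint
    _ = _ := by
        rw [lintegral_add_left (by fun_prop), lintegral_mul_const _ hY.ennreal_ofReal,
          ← ofReal_integral_eq_lintegral_ofReal hYi (ae_of_all _ hY₀),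
          ← ENNReal.ofReal_mul (integral_nonneg hY₀)]

theorem lintegral_ofReal_mul_logStar_sum_le {ι : Type*} [Fintype ι] {X : ι → Ω → ℝ}
    (hmeas : ∀ i, Measurable (X i)) (hindep : iIndepFun X μ) (hnonneg : ∀ i ω, 0 ≤ X i ω)
    (hint : ∀ i, Integrable (X i) μ) (i : ι) :
    ∫⁻ ω, ENNReal.ofReal (X i ω * logStar (∑ j, X j ω)) ∂μ
      ≤ ∫⁻ ω, ENNReal.ofReal (X i ω * logStar (X i ω)) ∂μ
        + ENNReal.ofReal ((∫ ω, X i ω ∂μ) * logStar (∫ ω, ∑ j, X j ω ∂μ)) := by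
  classical
  set T : Ω → ℝ := fun ω ↦ ∑ j ∈ Finset.univ.erase i, X j ω
  have hT : Measurable T := Finset.measurable_sum _ fun j _ ↦ hmeas j
  have hT₀ : ∀ ω, 0 ≤ T ω := fun ω ↦ Finset.sum_nonneg fun j _ ↦ hnonneg j ω
  have hTi : Integrable T μ := integrable_finsetSum _ fun j _ ↦ hint j
  have hXT : IndepFun (X i) T μ := by
    simpa only [Finset.sum_fn] using
      (hindep.indepFun_finsetSum_of_notMem hmeas (Finset.notMem_erase i Finset.univ)).symm
  have hsum : ∀ ω, ∑ j, X j ω = X i ω + T ω := fun ω ↦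
    (Finset.add_sum_erase _ _ (Finset.mem_univ i)).symm
  have hmean : ∫ ω, ∑ j, X j ω ∂μ = (∫ ω, X i ω ∂μ) + ∫ ω, T ω ∂μ := by
    simp_rw [hsum]
    exact integral_add (hint i) hTi
  calc ∫⁻ ω, ENNReal.ofReal (X i ω * logStar (∑ j, X j ω)) ∂μ
      = ∫⁻ ω, ENNReal.ofReal (X i ω * logStar (X i ω + T ω)) ∂μ := by simp_rw [hsum]
    _ ≤ ∫⁻ ω, ENNReal.ofReal (X i ω * logStar (X i ω + ∫ ω, T ω ∂μ)) ∂μ :=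
        lintegral_ofReal_mul_logStar_add_le (hmeas i) hT (hnonneg i) hT₀ hTi hXT
    _ ≤ ∫⁻ ω, ENNReal.ofReal (X i ω * logStar (X i ω)) ∂μ
          + ENNReal.ofReal ((∫ ω, X i ω ∂μ) * logStar (∫ ω, T ω ∂μ)) :=
        lintegral_ofReal_mul_logStar_add_const_le (hmeas i) (hnonneg i) (hint i)
          (integral_nonneg hT₀)
    _ ≤ _ := by
        gcongr
        · exact integral_nonneg (hnonneg i)
        · rw [hmean]
          exact logStar_mono (le_add_of_nonneg_left (integral_nonneg (hnonneg i)))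

end Independence

theorem sum_mul_logStar_le_general
    {Ω : Type*} [MeasurableSpace Ω] (μ : Measure Ω)
    (n : ℕ) (X : Fin n → Ω → ℝ)
    (hmeas : ∀ i, Measurable (X i))
    (hindep : iIndepFun X μ)
    (hnonneg : ∀ i ω, 0 ≤ X i ω)
    (hint : ∀ i, Integrable (X i) μ) :
    ∫⁻ ω, ENNReal.ofReal ((∑ i, X i ω) * logStar (∑ i, X i ω)) ∂ μ
      ≤ ENNReal.ofReal ((∫ ω, ∑ i, X i ω ∂ μ) * logStar (∫ ω, ∑ i, X i ω ∂ μ))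
        + ∑ i, ∫⁻ ω, ENNReal.ofReal (X i ω * logStar (X i ω)) ∂ μ := by
  set m := ∫ ω, ∑ i, X i ω ∂μ
  have hlogStar_sum : ∀ ω, 0 ≤ logStar (∑ i, X i ω) := fun ω ↦
    logStar_nonneg (Finset.sum_nonneg fun i _ ↦ hnonneg i ω)
  calc ∫⁻ ω, ENNReal.ofReal ((∑ i, X i ω) * logStar (∑ i, X i ω)) ∂μ
      = ∑ i, ∫⁻ ω, ENNReal.ofReal (X i ω * logStar (∑ j, X j ω)) ∂μ := by
        rw [← lintegral_finsetSum _ fun i _ ↦ by fun_prop]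
        refine lintegral_congr fun ω ↦ ?_
        rw [Finset.sum_mul, ENNReal.ofReal_sum_of_nonneg
          fun i _ ↦ mul_nonneg (hnonneg i ω) (hlogStar_sum ω)]
    _ ≤ ∑ i, (∫⁻ ω, ENNReal.ofReal (X i ω * logStar (X i ω)) ∂μ
          + ENNReal.ofReal ((∫ ω, X i ω ∂μ) * logStar m)) :=
        Finset.sum_le_sum fun i _ ↦ lintegral_ofReal_mul_logStar_sum_le hmeas hindep hnonneg hint i
    _ = ENNReal.ofReal (m * logStar m)
          + ∑ i, ∫⁻ ω, ENNReal.ofReal (X i ω * logStar (X i ω)) ∂μ := by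
        rw [Finset.sum_add_distrib, add_comm, ← ENNReal.ofReal_sum_of_nonneg fun i _ ↦
          mul_nonneg (integral_nonneg (hnonneg i)) (logStar_nonneg (integral_nonneg fun ω ↦
            Finset.sum_nonneg fun j _ ↦ hnonneg j ω)), ← Finset.sum_mul,
          ← integral_finsetSum _ fun i _ ↦ hint i]

/-- Lemma A.1 of Asmussen–Hering: for independent nonnegative integrable random
variables `X₁, …, Xₙ` with sum `Sₙ`,
`𝔼(Sₙ log* Sₙ) ≤ 𝔼(Sₙ)·log*(𝔼 Sₙ) + Σᵢ 𝔼(Xᵢ log* Xᵢ)`, with expectations in `[0,∞]`. -/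
theorem sum_mul_logStar_le
    {Ω : Type*} [MeasurableSpace Ω] (μ : Measure Ω) [IsProbabilityMeasure μ]
    (n : ℕ) (X : Fin n → Ω → ℝ)
    (hmeas : ∀ i, Measurable (X i))
    (hindep : iIndepFun X μ)
    (hnonneg : ∀ i ω, 0 ≤ X i ω)
    (hint : ∀ i, Integrable (X i) μ) :
    ∫⁻ ω, ENNReal.ofReal ((∑ i, X i ω) * logStar (∑ i, X i ω)) ∂ μ
      ≤ ENNReal.ofReal ((∫ ω, ∑ i, X i ω ∂ μ) * logStar (∫ ω, ∑ i, X i ω ∂ μ))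
        + ∑ i, ∫⁻ ω, ENNReal.ofReal (X i ω * logStar (X i ω)) ∂ μ :=
  sum_mul_logStar_le_general μ n X hmeas hindep hnonneg hint

end
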